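/- Let η ∈ ℝ with η < −1, set w = √(η² − 1) and τ = arccos(1/η)/w. Then τ > 0 and the purely imaginary number λ = i·w satisfies the characteristic equation i·w = −1 + η·exp(−i·w·τ). Hence for every negative feedback gain η < −1 there exists a critical delay at which the linear delay equation has a purely imaginary characteristic root with Hopf frequency √(η² − 1). -/
import Mathlib


/-- For every negative feedback gain `η < -1`, setting `w = √(η² - 1)` and
`τ = arccos(1/η)/w`, the delay `τ` is positive and the purely imaginary number
`i·w` satisfies the characteristic equation `i·w = -1 + η·exp(-i·w·τ)`:
a Hopf bifurcation with frequency `√(η² - 1)` occurs at this critical delay. -/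
theorem exists_critical_delay_of_negative_gain
    (η w τ : ℝ) (hη : η < -1)
    (hw : w = Real.sqrt (η ^ 2 - 1)) (hτdef : τ = Real.arccos (1 / η) / w) :
    0 < τ ∧
      Complex.I * (w : ℂ) = -1 + (η : ℂ) * Complex.exp (-(Complex.I * (w : ℂ)) * (τ : ℂ)) := by
  have hηneg : η < 0 := lt_trans hη (by norm_num)
  have hη0 : η ≠ 0 := ne_of_lt hηneg
  have hsq : (1 : ℝ) < η ^ 2 := by nlinarith
  have hpos : (0 : ℝ) < η ^ 2 - 1 := by linarith
  have hwpos : 0 < w := by rw [hw]; exact Real.sqrt_pos.mpr hpos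
  have hw2 : w ^ 2 = η ^ 2 - 1 := by rw [hw]; exact Real.sq_sqrt (le_of_lt hpos)
  have hx1 : (-1 : ℝ) < 1 / η := by
    rw [lt_div_iff_of_neg hηneg]; linarith
  have hx2 : 1 / η ≤ 1 := by
    have : 1 / η < 0 := div_neg_of_pos_of_neg one_pos hηneg
    linarith
  have harccos_pos : 0 < Real.arccos (1 / η) :=
    Real.arccos_pos.mpr (by
      have : 1 / η < 0 := div_neg_of_pos_of_neg one_pos hηneg
      linarith)
  have hτpos : 0 < τ := by rw [hτdef]; exact div_pos harccos_pos hwpos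
  refine ⟨hτpos, ?_⟩
  have hwτ : w * τ = Real.arccos (1 / η) := by
    rw [hτdef]; field_simp
  have hcos : Real.cos (w * τ) = 1 / η := by
    rw [hwτ]; exact Real.cos_arccos (le_of_lt hx1) hx2
  have hsin : Real.sin (w * τ) = -w / η := by
    rw [hwτ, Real.sin_arccos]
    have hnn : 0 ≤ -w / η := by rw [div_nonneg_iff]; right; constructor <;> linarith
    have heq : 1 - (1 / η) ^ 2 = (-w / η) ^ 2 := by
      field_simp
      nlinarith [hw2]
    rw [heq, Real.sqrt_sq hnn]
  have hexp : -(Complex.I * (w : ℂ)) * (τ : ℂ) = ((-(w * τ) : ℝ) : ℂ) * Complex.I := by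
    push_cast; ring
  rw [hexp, Complex.exp_mul_I, ← Complex.ofReal_cos, ← Complex.ofReal_sin,
    Real.cos_neg, Real.sin_neg, hcos, hsin]
  have : ((η : ℂ)) ≠ 0 := by exact_mod_cast hη0
  push_cast
  field_simp
  ring
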